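/- Let N ≥ 1, and for each i ∈ {1,…,N} let n_i ≥ 2 and let h_i : ℝ^{n_i} → ℝ be twice continuously differentiable on an open set containing Δ_{n_i}° with Hessian positive definite on Δ_{n_i}°. Then the map (x_1, …, x_N) ↦ (P_{H_1} ∇h_1(x_1), …, P_{H_N} ∇h_N(x_N)) is a bijection from Δ_{n_1}° × ⋯ × Δ_{n_N}° onto M_1 × ⋯ × M_N, where M_i := {P_{H_i} ∇h_i(x_i) : x_i ∈ Δ_{n_i}°}. -/

import Mathlib

/-!
The blocks do not interact, so it suffices that `x ↦ P_H ∇h(x)` is injective on `Δ°`.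
For `x ≠ y` in `Δ°` put `d = y - x`; since `∑ d = 0` and `P_H` is symmetric with `P_H d = d`,
`⟨P_H ∇h(x), d⟩ = ⟨∇h(x), d⟩`. Along the segment, `t ↦ ⟨∇h(x + t d), d⟩` has derivative
`dᵀ ∇²h d > 0`, hence `⟨∇h(y), d⟩ > ⟨∇h(x), d⟩`, so `P_H ∇h(x) ≠ P_H ∇h(y)`.
-/

open Matrix MeasureTheory

noncomputable section

/-- The standard probability simplex in `ℝ^n`. -/
def simplex (n : ℕ) : Set (Fin n → ℝ) := {x | (∀ i, 0 ≤ x i) ∧ ∑ i, x i = 1}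

/-- The relative interior of the standard probability simplex. -/
def simplexInt (n : ℕ) : Set (Fin n → ℝ) := {x | (∀ i, 0 < x i) ∧ ∑ i, x i = 1}

/-- The all-ones vector `𝟙`. -/
def ones (n : ℕ) : Fin n → ℝ := fun _ => 1

/-- The orthogonal projection matrix `P_H = I - (1/n) 𝟙 𝟙ᵀ` onto `H = {z : ∑ i, z i = 0}`. -/
def PH (n : ℕ) : Matrix (Fin n) (Fin n) ℝ :=
  1 - (n : ℝ)⁻¹ • Matrix.of fun _ _ => (1 : ℝ)

/-- The gradient (vector of partial derivatives) of `h`. -/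
def grad {n : ℕ} (h : (Fin n → ℝ) → ℝ) (x : Fin n → ℝ) : Fin n → ℝ :=
  fun i => fderiv ℝ h x (Pi.single i 1)

/-- The Hessian matrix of `h`. -/
def hess {n : ℕ} (h : (Fin n → ℝ) → ℝ) (x : Fin n → ℝ) : Matrix (Fin n) (Fin n) ℝ :=
  Matrix.of fun i j =>
    fderiv ℝ (fun y => fderiv ℝ h y (Pi.single j 1)) x (Pi.single i 1)

theorem Set.InjOn.piMap {ι : Type*} {α β : ι → Type*} {f : ∀ i, α i → β i} {t : ∀ i, Set (α i)}
    (hf : ∀ i, Set.InjOn (f i) (t i)) : Set.InjOn (Pi.map f) (Set.univ.pi t) :=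
  fun _ ha _ hb hab => funext fun i => hf i (ha i trivial) (hb i trivial) (congrFun hab i)

theorem fderiv_apply_sub_lt_of_fderiv_fderiv_pos {E : Type*} [NormedAddCommGroup E]
    [NormedSpace ℝ E] {f : E → ℝ} {s : Set E} (hs : Convex ℝ s)
    (hf : ∀ z ∈ s, DifferentiableAt ℝ (fderiv ℝ f) z)
    (hpos : ∀ z ∈ s, ∀ v, v ≠ 0 → 0 < fderiv ℝ (fderiv ℝ f) z v v)
    {x y : E} (hx : x ∈ s) (hy : y ∈ s) (hxy : x ≠ y) :
    fderiv ℝ f x (y - x) < fderiv ℝ f y (y - x) := by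
  set d := y - x
  have hseg : ∀ t ∈ Set.Icc (0 : ℝ) 1, x + t • d ∈ s := fun t ht => hs.add_smul_sub_mem hx hy ht
  have hderiv : ∀ t ∈ Set.Icc (0 : ℝ) 1, HasDerivAt (fun t : ℝ => fderiv ℝ f (x + t • d) d)
      (fderiv ℝ (fderiv ℝ f) (x + t • d) d d) t := by
    intro t ht
    have hline : HasDerivAt (fun t : ℝ => x + t • d) d t := by
      simpa using ((hasDerivAt_id t).smul_const d).const_add x
    exact ((ContinuousLinearMap.apply ℝ ℝ d).hasFDerivAt.comp _
      (hf _ (hseg t ht)).hasFDerivAt).comp_hasDerivAt t hline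
  have hmono : StrictMonoOn (fun t : ℝ => fderiv ℝ f (x + t • d) d) (Set.Icc 0 1) := by
    refine strictMonoOn_of_deriv_pos (convex_Icc 0 1)
      (fun t ht => (hderiv t ht).continuousAt.continuousWithinAt) fun t ht => ?_
    rw [interior_Icc] at ht
    rw [(hderiv t (Set.Ioo_subset_Icc_self ht)).deriv]
    exact hpos _ (hseg t (Set.Ioo_subset_Icc_self ht)) d (sub_ne_zero.mpr hxy.symm)
  simpa [d] using hmono (Set.left_mem_Icc.mpr zero_le_one) (Set.right_mem_Icc.mpr zero_le_one)
    zero_lt_one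

theorem convex_simplexInt (n : ℕ) : Convex ℝ (simplexInt n) := by
  have hsum : IsLinearMap ℝ fun x : Fin n → ℝ => ∑ i, x i :=
    ⟨fun x y => Finset.sum_add_distrib, fun c x => (Finset.mul_sum _ _ _).symm⟩
  have : simplexInt n = (Set.univ.pi fun _ => Set.Ioi 0) ∩ {x | ∑ i, x i = 1} := by
    ext; simp [simplexInt]
  exact this ▸ (convex_pi fun _ _ => convex_Ioi 0).inter (convex_hyperplane hsum 1)

theorem grad_dotProduct {n : ℕ} (h : (Fin n → ℝ) → ℝ) (x v : Fin n → ℝ) :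
    grad h x ⬝ᵥ v = fderiv ℝ h x v := by
  conv_rhs => rw [pi_eq_sum_univ' v]
  simp [grad, dotProduct, mul_comm]

theorem dotProduct_hess_mulVec {n : ℕ} {h : (Fin n → ℝ) → ℝ} {x : Fin n → ℝ}
    (hx : DifferentiableAt ℝ (fderiv ℝ h) x) (v w : Fin n → ℝ) :
    v ⬝ᵥ (hess h x *ᵥ w) = fderiv ℝ (fderiv ℝ h) x v w := by
  have hentry : ∀ i j, hess h x i j
      = fderiv ℝ (fderiv ℝ h) x (Pi.single i 1) (Pi.single j 1) := by
    intro i j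
    simp [hess, fderiv_clm_apply hx (differentiableAt_const _)]
  conv_rhs => rw [pi_eq_sum_univ' v, pi_eq_sum_univ' w]
  simp only [dotProduct, mulVec, hentry, map_sum, map_smul, _root_.sum_apply, _root_.smul_apply,
    smul_eq_mul, Finset.mul_sum, mul_comm, mul_left_comm]
  exact Finset.sum_comm

theorem PH_mulVec_dotProduct_of_sum_eq_zero {n : ℕ} (v : Fin n → ℝ) {d : Fin n → ℝ}
    (hd : ∑ i, d i = 0) : (PH n *ᵥ v) ⬝ᵥ d = v ⬝ᵥ d := by
  have hconst : (Matrix.of fun _ _ => (1 : ℝ)) *ᵥ v ⬝ᵥ d = 0 := by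
    simp [mulVec, dotProduct, ← Finset.mul_sum, hd]
  simp only [PH, sub_mulVec, one_mulVec, smul_mulVec, sub_dotProduct, smul_dotProduct, hconst,
    smul_zero, sub_zero]

theorem injOn_PH_mulVec_grad {n : ℕ} {h : (Fin n → ℝ) → ℝ} {U : Set (Fin n → ℝ)}
    (hU : IsOpen U) (hUsub : simplexInt n ⊆ U) (hC2 : ContDiffOn ℝ 2 h U)
    (hpos : ∀ x ∈ simplexInt n, ∀ v : Fin n → ℝ, v ≠ 0 → 0 < v ⬝ᵥ (hess h x *ᵥ v)) :
    Set.InjOn (fun x => PH n *ᵥ grad h x) (simplexInt n) := by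
  have hdiff : ∀ z ∈ simplexInt n, DifferentiableAt ℝ (fderiv ℝ h) z := fun z hz =>
    ((hC2.fderiv_of_isOpen hU (m := 1) le_rfl).differentiableOn one_ne_zero).differentiableAt
      (hU.mem_nhds (hUsub hz))
  intro x hx y hy hxy
  by_contra hne
  have hsum : ∑ i, (y - x) i = 0 := by simp [Finset.sum_sub_distrib, hx.2, hy.2]
  have hlt := fderiv_apply_sub_lt_of_fderiv_fderiv_pos (convex_simplexInt n) hdiff
    (fun z hz v hv => dotProduct_hess_mulVec (hdiff z hz) v v ▸ hpos z hz v hv) hx hy hne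
  rw [← grad_dotProduct, ← grad_dotProduct, ← PH_mulVec_dotProduct_of_sum_eq_zero _ hsum,
    ← PH_mulVec_dotProduct_of_sum_eq_zero (grad h y) hsum] at hlt
  exact hlt.ne (congrArg (· ⬝ᵥ (y - x)) hxy)

theorem stmt14_general {N : ℕ} (n : Fin N → ℕ)
    (h : (i : Fin N) → (Fin (n i) → ℝ) → ℝ)
    (U : (i : Fin N) → Set (Fin (n i) → ℝ)) (hU : ∀ i, IsOpen (U i))
    (hUsub : ∀ i, simplexInt (n i) ⊆ U i)
    (hC2 : ∀ i, ContDiffOn ℝ 2 (h i) (U i))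
    (hpos : ∀ i, ∀ x ∈ simplexInt (n i), ∀ v : Fin (n i) → ℝ, v ≠ 0 →
      0 < v ⬝ᵥ (hess (h i) x *ᵥ v)) :
    Set.BijOn
      (fun (x : (i : Fin N) → Fin (n i) → ℝ) (i : Fin N) => PH (n i) *ᵥ grad (h i) (x i))
      (Set.univ.pi fun i => simplexInt (n i))
      (Set.univ.pi fun i => (fun xi => PH (n i) *ᵥ grad (h i) xi) '' simplexInt (n i)) := by
  rw [← Set.piMap_image_univ_pi]
  exact (Set.InjOn.piMap fun i =>
    injOn_PH_mulVec_grad (hU i) (hUsub i) (hC2 i) (hpos i)).bijOn_image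

/-- (Bijectivity content of Lemma 3 of the paper, blockwise.) For each
learner `i`, let `h i` be C² near `Δ_{n i}°` with positive definite Hessian there. Then
`(x₁, …, x_N) ↦ (P_{H₁} ∇h₁(x₁), …, P_{H_N} ∇h_N(x_N))` is a bijection from
`Δ_{n₁}° × ⋯ × Δ_{n_N}°` onto `M₁ × ⋯ × M_N` with `M_i = {P_{H_i} ∇h_i(x) : x ∈ Δ_{n_i}°}`. -/
theorem stmt14 {N : ℕ} (hN : 1 ≤ N) (n : Fin N → ℕ) (hn : ∀ i, 2 ≤ n i)
    (h : (i : Fin N) → (Fin (n i) → ℝ) → ℝ)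
    (U : (i : Fin N) → Set (Fin (n i) → ℝ)) (hU : ∀ i, IsOpen (U i))
    (hUsub : ∀ i, simplexInt (n i) ⊆ U i)
    (hC2 : ∀ i, ContDiffOn ℝ 2 (h i) (U i))
    (hpos : ∀ i, ∀ x ∈ simplexInt (n i), ∀ v : Fin (n i) → ℝ, v ≠ 0 →
      0 < v ⬝ᵥ (hess (h i) x *ᵥ v)) :
    Set.BijOn
      (fun (x : (i : Fin N) → Fin (n i) → ℝ) (i : Fin N) => PH (n i) *ᵥ grad (h i) (x i))
      (Set.univ.pi fun i => simplexInt (n i))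
      (Set.univ.pi fun i => (fun xi => PH (n i) *ᵥ grad (h i) xi) '' simplexInt (n i)) :=
  stmt14_general n h U hU hUsub hC2 hpos
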